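/- arXiv:2307.04042 — 2 statements merged into one kernel-verified Lean document; each statement's English description precedes it below -/
import Mathlib

section
/- Let P_X be a probability measure on [0,1]^d whose density is bounded below by c > 0. Let g : [0,1]^d → ℝ≥0 be continuous, h ∈ (0,1), p ∈ [1,∞], and Δ_h(x) := {x' ∈ [0,1]^d : ‖x−x'‖_p ≤ h}. Then E_{X∼P_X}[ sup_{x'∈Δ_h(X)} g(x') ] ≥ C · h^d · ‖g‖_∞, where C = c · Γ(1/p+1)^d / Γ(d/p+1) · 2^{-d} (a constant depending only on c, p, d accounting for boundary truncation). -/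
open MeasureTheory Set
open scoped ENNReal

/-- The `ℓ^p`-norm of a vector in `ℝ^d`, for `p ∈ [1, ∞]`. -/
noncomputable def lpNorm (d : ℕ) (p : ℝ≥0∞) (x : Fin d → ℝ) : ℝ :=
  if p = ⊤ then sSup (Set.range fun i => |x i|)
  else (∑ i, |x i| ^ p.toReal) ^ (1 / p.toReal)

/-- The adversarial neighborhood `Δ_h^p(x)`. -/
noncomputable def advNbhd (d : ℕ) (p : ℝ≥0∞) (h : ℝ) (x : Fin d → ℝ) :
    Set (Fin d → ℝ) :=
  {x' ∈ Set.Icc (0 : Fin d → ℝ) 1 | lpNorm d p (fun i => x i - x' i) ≤ h}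

/-- `1/p` as a real number, with the convention `1/∞ = 0`. -/
noncomputable def pInv (p : ℝ≥0∞) : ℝ := if p = ⊤ then 0 else 1 / p.toReal

/-!
Let `x₀` maximise `g` on the cube. If `x ∈ Δ_h(x₀)` then `x₀ ∈ Δ_h(x)`, so the integrand is at
least `g x₀ = ‖g‖_∞` on `Δ_h(x₀)`, and the expectation is at least
`‖g‖_∞ P(Δ_h(x₀)) ≥ c ‖g‖_∞ vol(Δ_h(x₀))`. Moving each coordinate of `x₀` by at most `h/2 < 1/2`
towards the centre of the cube stays in the cube, so `Δ_h(x₀)` contains a translate of one orthant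
of the `ℓ^p` ball of radius `h/2`. Coordinate sign flips preserve Lebesgue measure and the ball and
permute the orthants, so this orthant has at least `2^{-d}` of the ball's volume
`Γ(1/p+1)^d / Γ(d/p+1) · h^d`.
-/

lemma pInv_nonneg (p : ℝ≥0∞) : 0 ≤ pInv p := by
  unfold pInv
  split_ifs <;> positivity

section LpNorm

variable {d : ℕ} {p : ℝ≥0∞}

lemma lpNorm_of_ne_top (hp : p ≠ ⊤) (x : Fin d → ℝ) :
    lpNorm d p x = (∑ i, |x i| ^ p.toReal) ^ (1 / p.toReal) :=
  if_neg hp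

lemma lpNorm_top_eq_norm (x : Fin d → ℝ) : lpNorm d ⊤ x = ‖x‖ := by
  rw [_root_.lpNorm, if_pos rfl]
  refine le_antisymm (Real.sSup_le ?_ (norm_nonneg x)) ?_
  · rintro _ ⟨i, rfl⟩
    exact norm_le_pi_norm x i
  · refine (pi_norm_le_iff_of_nonneg (Real.sSup_nonneg ?_)).2 fun i => ?_
    · rintro _ ⟨i, rfl⟩
      exact abs_nonneg _
    · exact le_csSup (Set.finite_range _).bddAbove ⟨i, rfl⟩

lemma lpNorm_nonneg (x : Fin d → ℝ) : 0 ≤ lpNorm d p x := by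
  by_cases hpt : p = ⊤
  · rw [hpt, lpNorm_top_eq_norm]
    exact norm_nonneg x
  · rw [lpNorm_of_ne_top hpt]
    positivity

lemma lpNorm_congr_abs {x y : Fin d → ℝ} (hxy : ∀ i, |x i| = |y i|) :
    lpNorm d p x = lpNorm d p y := by
  simp only [_root_.lpNorm, hxy]

lemma lpNorm_sub_comm (x y : Fin d → ℝ) :
    lpNorm d p (fun i => x i - y i) = lpNorm d p (fun i => y i - x i) :=
  lpNorm_congr_abs fun i => abs_sub_comm (x i) (y i)

lemma abs_le_lpNorm (hp : p ≠ 0) (x : Fin d → ℝ) (i : Fin d) : |x i| ≤ lpNorm d p x := by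
  by_cases hpt : p = ⊤
  · rw [hpt, lpNorm_top_eq_norm]
    exact norm_le_pi_norm x i
  have hq : 0 < p.toReal := ENNReal.toReal_pos hp hpt
  rw [lpNorm_of_ne_top hpt]
  calc |x i| = (|x i| ^ p.toReal) ^ (1 / p.toReal) := by
        rw [← Real.rpow_mul (abs_nonneg _), mul_one_div_cancel hq.ne', Real.rpow_one]
    _ ≤ (∑ j, |x j| ^ p.toReal) ^ (1 / p.toReal) := by
        gcongr
        exact Finset.single_le_sum (f := fun j => |x j| ^ p.toReal)
          (fun j _ => by positivity) (Finset.mem_univ i)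

lemma continuous_lpNorm : Continuous (lpNorm d p) := by
  by_cases hpt : p = ⊤
  · subst hpt
    simpa only [funext lpNorm_top_eq_norm] using continuous_norm
  simp only [funext (lpNorm_of_ne_top (d := d) hpt)]
  refine Continuous.rpow_const ?_ fun _ => Or.inr (by positivity)
  exact continuous_finsetSum _ fun i _ =>
    (continuous_apply i).abs.rpow_const fun _ => Or.inr ENNReal.toReal_nonneg

lemma volume_lpNorm_le (hp : 1 ≤ p) {r : ℝ} (hr : 0 ≤ r) :
    volume {x : Fin d → ℝ | lpNorm d p x ≤ r} =
      ENNReal.ofReal ((2 * r) ^ d * Real.Gamma (pInv p + 1) ^ d / Real.Gamma (d * pInv p + 1)) := by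
  by_cases hpt : p = ⊤
  · subst hpt
    simp only [lpNorm_top_eq_norm, ← mem_closedBall_zero_iff, Set.ofPred_mem_eq,
      Real.volume_pi_closedBall 0 hr, pInv]
    simp
  have hq : 1 ≤ p.toReal := by simpa using ENNReal.toReal_mono hpt hp
  simp only [pInv, if_neg hpt, funext (lpNorm_of_ne_top (d := d) hpt)]
  rcases d.eq_zero_or_pos with rfl | hd
  · simp [Real.zero_rpow (inv_pos.2 (zero_lt_one.trans_le hq)).ne', hr, volume_pi]
  have : Nonempty (Fin d) := ⟨⟨0, hd⟩⟩
  rw [volume_sum_rpow_le (Fin d) hq, Fintype.card_fin, ← ENNReal.ofReal_pow hr,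
    ← ENNReal.ofReal_mul (by positivity)]
  congr 1
  rw [mul_one_div]
  ring

end LpNorm

section Orthant

variable {ι : Type*}

def signFlip (τ : ι → Bool) (x : ι → ℝ) : ι → ℝ := fun i => if τ i then x i else -x i

def orthant (τ : ι → Bool) : Set (ι → ℝ) := signFlip τ ⁻¹' Ici 0

lemma abs_signFlip (τ : ι → Bool) (x : ι → ℝ) (i : ι) : |signFlip τ x i| = |x i| := by
  unfold signFlip
  split_ifs <;> simp

lemma measurePreserving_signFlip [Fintype ι] (τ : ι → Bool) :
    MeasurePreserving (signFlip τ) (volume : Measure (ι → ℝ)) volume := by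
  have hflip : ∀ i, MeasurePreserving (fun t : ℝ => if τ i then t else -t) volume volume := by
    intro i
    cases τ i
    · exact Measure.measurePreserving_neg volume
    · exact MeasurePreserving.id volume
  exact measurePreserving_pi _ _ hflip

lemma volume_le_two_pow_mul_volume_inter_orthant [Fintype ι] [DecidableEq ι] {S : Set (ι → ℝ)}
    (hS : NullMeasurableSet S) (hSflip : ∀ τ, signFlip τ ⁻¹' S = S) (σ : ι → Bool) :
    volume S ≤ 2 ^ Fintype.card ι * volume (S ∩ orthant σ) := by
  have horthant : ∀ τ, volume (S ∩ orthant τ) = volume (S ∩ Ici 0) := fun τ => by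
    rw [orthant, ← hSflip τ, ← preimage_inter, hSflip τ]
    exact (measurePreserving_signFlip τ).measure_preimage
      (hS.inter measurableSet_Ici.nullMeasurableSet)
  have hcover : S ⊆ ⋃ τ, S ∩ orthant τ := fun x hx =>
    mem_iUnion.2 ⟨fun i => decide (0 ≤ x i), hx, fun i => by
      by_cases hxi : 0 ≤ x i
      · simp [signFlip, hxi]
      · simpa [signFlip, hxi] using (not_le.1 hxi).le⟩
  calc volume S ≤ ∑ τ, volume (S ∩ orthant τ) :=
        (measure_mono hcover).trans (measure_iUnion_fintype_le _ _)
    _ = 2 ^ Fintype.card ι * volume (S ∩ orthant σ) := by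
        simp [horthant]

end Orthant

section AdvNbhd

variable {d : ℕ} {p : ℝ≥0∞} {h : ℝ}

lemma measurableSet_advNbhd (x : Fin d → ℝ) : MeasurableSet (advNbhd d p h x) :=
  measurableSet_Icc.inter <| measurableSet_le
    (continuous_lpNorm.comp (continuous_const.sub continuous_id)).measurable measurable_const

lemma preimage_sub_orthant_subset_advNbhd (hp : p ≠ 0) {x₀ : Fin d → ℝ}
    (hx₀ : x₀ ∈ Icc 0 1) (hh : h ≤ 1) :
    (· - x₀) ⁻¹' ({y | lpNorm d p y ≤ h / 2} ∩ orthant fun i => decide (x₀ i ≤ 1 / 2)) ⊆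
      advNbhd d p h x₀ := by
  rintro x ⟨hball, horthant⟩
  have hnorm : lpNorm d p (x - x₀) ≤ h / 2 := hball
  have hcube : ∀ i, 0 ≤ x i ∧ x i ≤ 1 := fun i => by
    have hi := abs_le.1 ((abs_le_lpNorm hp (x - x₀) i).trans hnorm)
    have hsign := horthant i
    have h0 : 0 ≤ x₀ i := hx₀.1 i
    have h1 : x₀ i ≤ 1 := hx₀.2 i
    by_cases hmid : x₀ i ≤ 1 / 2 <;>
      simp only [signFlip, hmid, decide_true, decide_false, Bool.false_eq_true, if_true, if_false,
        Pi.sub_apply, Pi.zero_apply] at hsign hi <;>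
      constructor <;> linarith
  refine ⟨⟨fun i => (hcube i).1, fun i => (hcube i).2⟩, ?_⟩
  have hnonneg := _root_.lpNorm_nonneg (d := d) (p := p) (x - x₀)
  rw [_root_.lpNorm_sub_comm]
  exact hnorm.trans (by linarith)

lemma volume_advNbhd_ge (hp : 1 ≤ p) {x₀ : Fin d → ℝ} (hx₀ : x₀ ∈ Icc 0 1)
    (hh0 : 0 ≤ h) (hh1 : h ≤ 1) :
    ENNReal.ofReal (Real.Gamma (pInv p + 1) ^ d / Real.Gamma (d * pInv p + 1)
        * (2 : ℝ) ^ (-(d : ℤ)) * h ^ d) ≤ volume (advNbhd d p h x₀) := by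
  set B := {y : Fin d → ℝ | lpNorm d p y ≤ h / 2}
  set σ : Fin d → Bool := fun i => decide (x₀ i ≤ 1 / 2)
  have hB : NullMeasurableSet B :=
    (measurableSet_le continuous_lpNorm.measurable measurable_const).nullMeasurableSet
  have hBflip : ∀ τ, signFlip τ ⁻¹' B = B := fun τ => Set.ext fun y => by
    simp only [B, mem_preimage, mem_ofPred_eq, lpNorm_congr_abs (abs_signFlip τ y)]
  calc _ ≤ volume (B ∩ orthant σ) := by
        refine (ENNReal.mul_le_mul_iff_right (a := 2 ^ d) (by positivity) (by simp)).1 ?_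
        calc _ = volume B := by
              rw [volume_lpNorm_le hp (by positivity : 0 ≤ h / 2), ← ENNReal.ofReal_ofNat 2,
                ← ENNReal.ofReal_pow zero_le_two, ← ENNReal.ofReal_mul (by positivity)]
              congr 1
              rw [zpow_neg, zpow_natCast]
              field_simp
          _ ≤ _ := by
              simpa using volume_le_two_pow_mul_volume_inter_orthant hB hBflip σ
    _ = volume ((· - x₀) ⁻¹' (B ∩ orthant σ)) := by
        simp only [sub_eq_add_neg, measure_preimage_add_right]
    _ ≤ volume (advNbhd d p h x₀) :=
        measure_mono (preimage_sub_orthant_subset_advNbhd (one_pos.trans_le hp).ne' hx₀ hh1)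

lemma le_sSup_image_advNbhd {g : (Fin d → ℝ) → ℝ} (hg : BddAbove (g '' Icc 0 1))
    {x₀ x : Fin d → ℝ} (hx₀ : x₀ ∈ Icc 0 1) (hx : x ∈ advNbhd d p h x₀) :
    g x₀ ≤ sSup (g '' advNbhd d p h x) :=
  le_csSup (hg.mono (image_mono fun _ hy => hy.1))
    (mem_image_of_mem g ⟨hx₀, (_root_.lpNorm_sub_comm x x₀).trans_le hx.2⟩)

end AdvNbhd

theorem adv_expectation_ge_hd_sup_general
    (d : ℕ) (p : ℝ≥0∞) (hp : 1 ≤ p) (c : ℝ) (hc : 0 < c)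
    (P : Measure (Fin d → ℝ))
    (hdens : ∀ s : Set (Fin d → ℝ), MeasurableSet s →
      s ⊆ Set.Icc (0 : Fin d → ℝ) 1 → ENNReal.ofReal c * volume s ≤ P s)
    (g : (Fin d → ℝ) → ℝ) (hg : ContinuousOn g (Set.Icc (0 : Fin d → ℝ) 1))
    (h : ℝ) (hh : h ∈ Set.Ioo (0 : ℝ) 1) :
    ENNReal.ofReal
        ((c * (Real.Gamma (pInv p + 1)) ^ d / Real.Gamma (d * pInv p + 1)
            * (2 : ℝ) ^ (-(d : ℤ)))
          * h ^ d * sSup (g '' Set.Icc (0 : Fin d → ℝ) 1)) ≤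
      ∫⁻ x, ENNReal.ofReal (sSup (g '' advNbhd d p h x)) ∂P := by
  obtain ⟨hh0, hh1⟩ := hh
  obtain ⟨x₀, hx₀, hmax⟩ :=
    isCompact_Icc.exists_sSup_image_eq (nonempty_Icc.2 zero_le_one) hg
  set A := advNbhd d p h x₀
  have hA : MeasurableSet A := measurableSet_advNbhd x₀
  have hpoint : A.indicator (fun _ => ENNReal.ofReal (g x₀)) ≤
      fun x => ENNReal.ofReal (sSup (g '' advNbhd d p h x)) :=
    indicator_le fun x hx => ENNReal.ofReal_le_ofReal <|
      le_sSup_image_advNbhd (isCompact_Icc.bddAbove_image hg) hx₀ hx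
  have hpInv := pInv_nonneg p
  set K := Real.Gamma (pInv p + 1) ^ d / Real.Gamma (d * pInv p + 1) * (2 : ℝ) ^ (-(d : ℤ))
    with hK_def
  calc _ = ENNReal.ofReal c * ENNReal.ofReal (K * h ^ d) * ENNReal.ofReal (g x₀) := by
        rw [hmax, ← ENNReal.ofReal_mul hc.le, ← ENNReal.ofReal_mul (by positivity), hK_def]
        ring_nf
    _ ≤ ENNReal.ofReal c * volume A * ENNReal.ofReal (g x₀) := by
        gcongr
        exact volume_advNbhd_ge hp hx₀ hh0.le hh1.le
    _ ≤ P A * ENNReal.ofReal (g x₀) := by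
        gcongr
        exact hdens A hA fun _ hx => hx.1
    _ = ∫⁻ x, A.indicator (fun _ => ENNReal.ofReal (g x₀)) x ∂P := by
        rw [lintegral_indicator_const hA, mul_comm]
    _ ≤ _ := lintegral_mono hpoint

theorem adv_expectation_ge_hd_sup
    (d : ℕ) (p : ℝ≥0∞) (hp : 1 ≤ p) (c : ℝ) (hc : 0 < c)
    (P : Measure (Fin d → ℝ)) [IsProbabilityMeasure P]
    (hPcube : P (Set.Icc (0 : Fin d → ℝ) 1) = 1)
    (hdens : ∀ s : Set (Fin d → ℝ), MeasurableSet s →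
      s ⊆ Set.Icc (0 : Fin d → ℝ) 1 → ENNReal.ofReal c * volume s ≤ P s)
    (g : (Fin d → ℝ) → ℝ) (hg : ContinuousOn g (Set.Icc (0 : Fin d → ℝ) 1))
    (hg0 : ∀ x, 0 ≤ g x)
    (h : ℝ) (hh : h ∈ Set.Ioo (0 : ℝ) 1) :
    ENNReal.ofReal
        ((c * (Real.Gamma (pInv p + 1)) ^ d / Real.Gamma (d * pInv p + 1)
            * (2 : ℝ) ^ (-(d : ℤ)))
          * h ^ d * sSup (g '' Set.Icc (0 : Fin d → ℝ) 1)) ≤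
      ∫⁻ x, ENNReal.ofReal (sSup (g '' advNbhd d p h x)) ∂P :=
  adv_expectation_ge_hd_sup_general d p hp c hc P hdens g hg h hh
end

section
/- Let P_X be a probability measure on [0,1]^d with density bounded below by c > 0, and let f, f* : [0,1]^d → ℝ be bounded continuous functions. Define the adversarial norm ‖g‖²_{P_X,Δ} := E_{X∼P_X}[ sup_{x'∈Δ_h^p(X)} g(x')² ] where Δ_h^p(x) = {x' ∈ [0,1]^d : ‖x−x'‖_p ≤ h}. Then ‖f − f*‖²_{P_X,Δ} ≥ C_{c,p,d} h^d ‖f − f*‖²_∞ for a constant C_{c,p,d} > 0 depending only on c, p, d. -/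
/-!
If `|f - f*|` attains its maximum `M` at `x₀`, then every `x` in the sup-norm cube of side
`h / (d + 1)` around `x₀` sees `x₀` in its `ℓ^p` neighbourhood of radius `h`, so the integrand is
at least `M²` there. That cube meets `[0,1]^d` in volume at least `(h / (d + 1))^d`, which the
density bound turns into `P`-mass at least `c (h / (d + 1))^d`.
-/

open MeasureTheory Set
open scoped ENNReal

open Function

theorem lpNorm_le_of_forall_abs_le {d : ℕ} {p : ℝ≥0∞} (hp : 1 ≤ p) {x : Fin d → ℝ} {r : ℝ}
    (hr : 0 ≤ r) (hx : ∀ i, |x i| ≤ r) : lpNorm d p x ≤ (d + 1) * r := by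
  have hd1 : (1 : ℝ) ≤ d + 1 := by linarith [(Nat.cast_nonneg d : (0 : ℝ) ≤ d)]
  unfold _root_.lpNorm
  split_ifs with hptop
  · exact Real.sSup_le (by rintro _ ⟨i, rfl⟩; nlinarith [hx i]) (by positivity)
  set q := p.toReal
  have hq1 : 1 ≤ q := by simpa using ENNReal.toReal_mono hptop hp
  have hq0 : 0 < q := one_pos.trans_le hq1
  rw [one_div, Real.rpow_inv_le_iff_of_pos (by positivity) (by positivity) hq0]
  calc ∑ i, |x i| ^ q ≤ ∑ _i : Fin d, r ^ q :=
        Finset.sum_le_sum fun i _ => Real.rpow_le_rpow (abs_nonneg _) (hx i) hq0.le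
    _ = d * r ^ q := by simp
    _ ≤ (d + 1) ^ q * r ^ q := by
        gcongr
        calc (d : ℝ) ≤ d + 1 := by linarith
          _ = (d + 1) ^ (1 : ℝ) := (Real.rpow_one _).symm
          _ ≤ (d + 1) ^ q := Real.rpow_le_rpow_of_exponent_le hd1 hq1
    _ = ((d + 1) * r) ^ q := (Real.mul_rpow (by positivity) hr).symm

theorem mem_advNbhd_of_forall_abs_sub_le {d : ℕ} {p : ℝ≥0∞} (hp : 1 ≤ p) {h : ℝ} (hh : 0 ≤ h)
    {x x₀ : Fin d → ℝ} (hx₀ : x₀ ∈ Icc 0 1) (hx : ∀ i, |x i - x₀ i| ≤ h / (d + 1)) :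
    x₀ ∈ advNbhd d p h x := by
  refine ⟨hx₀, ?_⟩
  simpa [mul_div_cancel₀ h (Nat.cast_add_one_ne_zero d)] using
    lpNorm_le_of_forall_abs_le hp (by positivity) hx

theorem ofReal_pow_le_volume_Icc_inter_Icc {ι : Type*} [Fintype ι] {x₀ : ι → ℝ}
    (hx₀ : x₀ ∈ Icc 0 1) {r : ℝ} (hr0 : 0 ≤ r) (hr1 : r ≤ 1) :
    ENNReal.ofReal r ^ Fintype.card ι ≤
      volume (Icc 0 1 ∩ Icc (x₀ - const ι r) (x₀ + const ι r)) := by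
  rw [Icc_inter_Icc, Real.volume_Icc_pi]
  refine Finset.pow_card_le_prod _ _ _ fun i _ => ENNReal.ofReal_le_ofReal ?_
  have h0 := hx₀.1 i
  have h1 := hx₀.2 i
  simp only [Pi.sup_apply, Pi.inf_apply, Pi.zero_apply, Pi.one_apply, Pi.add_apply,
    Pi.sub_apply, const_apply] at h0 h1 ⊢
  rcases max_cases (0 : ℝ) (x₀ i - r) with ⟨hmax, -⟩ | ⟨hmax, -⟩ <;>
    rcases min_cases (1 : ℝ) (x₀ i + r) with ⟨hmin, -⟩ | ⟨hmin, -⟩ <;>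
    linarith

theorem ofReal_le_lintegral_sSup_advNbhd {d : ℕ} {p : ℝ≥0∞} (hp : 1 ≤ p) {c h : ℝ}
    (hc : 0 ≤ c) (hh0 : 0 ≤ h) (hh1 : h ≤ 1) {P : Measure (Fin d → ℝ)}
    (hP : ∀ s, MeasurableSet s → s ⊆ Icc 0 1 → ENNReal.ofReal c * volume s ≤ P s)
    {g : (Fin d → ℝ) → ℝ} (hg : BddAbove (g '' Icc 0 1)) {x₀ : Fin d → ℝ}
    (hx₀ : x₀ ∈ Icc 0 1) :
    ENNReal.ofReal (c / (d + 1) ^ d * h ^ d * g x₀) ≤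
      ∫⁻ x, ENNReal.ofReal (sSup (g '' advNbhd d p h x)) ∂P := by
  set r : ℝ := h / (d + 1)
  have hr0 : 0 ≤ r := by positivity
  have hr1 : r ≤ 1 := (div_le_self hh0 (by simp)).trans hh1
  set S := Icc 0 1 ∩ Icc (x₀ - const _ r) (x₀ + const _ r)
  have hS : MeasurableSet S := measurableSet_Icc.inter measurableSet_Icc
  have hmass : ENNReal.ofReal (c * r ^ d) ≤ P S := by
    calc ENNReal.ofReal (c * r ^ d) = ENNReal.ofReal c * ENNReal.ofReal r ^ d := by
          rw [ENNReal.ofReal_mul hc, ENNReal.ofReal_pow hr0]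
      _ ≤ ENNReal.ofReal c * volume S := by
          gcongr
          simpa using ofReal_pow_le_volume_Icc_inter_Icc hx₀ hr0 hr1
      _ ≤ P S := hP S hS inter_subset_left
  have hpoint : ∀ x ∈ S, ENNReal.ofReal (g x₀) ≤ ENNReal.ofReal (sSup (g '' advNbhd d p h x)) := by
    intro x hx
    have hmem : x₀ ∈ advNbhd d p h x := mem_advNbhd_of_forall_abs_sub_le hp hh0 hx₀ fun i => by
      have hlo : x₀ i - r ≤ x i := hx.2.1 i
      have hhi : x i ≤ x₀ i + r := hx.2.2 i
      exact abs_sub_le_iff.2 ⟨by linarith, by linarith⟩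
    exact ENNReal.ofReal_le_ofReal <|
      le_csSup (hg.mono (image_mono (sep_subset _ _))) (mem_image_of_mem g hmem)
  calc ENNReal.ofReal (c / (d + 1) ^ d * h ^ d * g x₀)
        = ENNReal.ofReal (c * r ^ d) * ENNReal.ofReal (g x₀) := by
          rw [← ENNReal.ofReal_mul (by positivity), div_pow]
          congr 1
          field_simp
    _ ≤ P S * ENNReal.ofReal (g x₀) := by gcongr
    _ = ∫⁻ x, S.indicator (fun _ => ENNReal.ofReal (g x₀)) x ∂P := by
          rw [lintegral_indicator_const hS, mul_comm]
    _ ≤ ∫⁻ x, ENNReal.ofReal (sSup (g '' advNbhd d p h x)) ∂P :=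
          lintegral_mono <| indicator_le hpoint

theorem adv_norm_lower_bounds_sup_norm
    (d : ℕ) (p : ℝ≥0∞) (hp : 1 ≤ p) (c : ℝ) (hc : 0 < c) :
    ∃ C > (0 : ℝ), ∀ h : ℝ, h ∈ Set.Ioo (0 : ℝ) 1 →
      ∀ P : Measure (Fin d → ℝ), IsProbabilityMeasure P →
        P (Set.Icc (0 : Fin d → ℝ) 1) = 1 →
        (∀ s : Set (Fin d → ℝ), MeasurableSet s →
          s ⊆ Set.Icc (0 : Fin d → ℝ) 1 → ENNReal.ofReal c * volume s ≤ P s) →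
        ∀ f fs : (Fin d → ℝ) → ℝ,
          ContinuousOn f (Set.Icc (0 : Fin d → ℝ) 1) →
          ContinuousOn fs (Set.Icc (0 : Fin d → ℝ) 1) →
          ENNReal.ofReal
              (C * h ^ d * (sSup ((fun x => |f x - fs x|) '' Set.Icc (0 : Fin d → ℝ) 1)) ^ 2) ≤
            ∫⁻ x, ENNReal.ofReal
                (sSup ((fun x' => (f x' - fs x') ^ 2) '' advNbhd d p h x)) ∂P := by
  refine ⟨c / (d + 1) ^ d, by positivity, ?_⟩
  rintro h ⟨hh0, hh1⟩ P - - hP f fs hf hfs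
  obtain ⟨x₀, hx₀, hM⟩ :=
    isCompact_Icc.exists_sSup_image_eq (nonempty_Icc.2 zero_le_one)
      (f := fun x => |f x - fs x|) (hf.sub hfs).abs
  rw [hM, sq_abs]
  exact ofReal_le_lintegral_sSup_advNbhd hp hc.le hh0.le hh1.le hP
    (isCompact_Icc.bddAbove_image ((hf.sub hfs).pow 2)) hx₀
end
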